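/- arXiv:2104.06938 — 2 statements merged into one kernel-verified Lean document; each statement's English description precedes it below -/
import Mathlib

section
/- The Shifts product basis is unextendible: there is no nonzero product vector |a⟩⊗|b⟩⊗|c⟩ in (ℂ²)^⊗3 orthogonal to all four Shifts states S₁, S₂, S₃, S₄. -/
noncomputable section

open scoped BigOperators

abbrev Q3 := Fin 2 × Fin 2 × Fin 2

def ket0 : Fin 2 → ℂ := ![1, 0]
def ket1 : Fin 2 → ℂ := ![0, 1]
noncomputable def ketP : Fin 2 → ℂ := ![(Real.sqrt 2 : ℂ)⁻¹, (Real.sqrt 2 : ℂ)⁻¹]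
noncomputable def ketM : Fin 2 → ℂ := ![(Real.sqrt 2 : ℂ)⁻¹, -(Real.sqrt 2 : ℂ)⁻¹]

/-- tensor product of three single-qubit vectors -/
def tp3 (a b c : Fin 2 → ℂ) : Q3 → ℂ := fun x => a x.1 * b x.2.1 * c x.2.2

/-- the four Shifts UPB states -/
noncomputable def Shifts : Fin 4 → Q3 → ℂ :=
  ![tp3 ket0 ket1 ketP, tp3 ket1 ketP ket0, tp3 ketP ket0 ket1, tp3 ketM ketM ketM]

/-- standard inner product -/
def ip {n : Type*} [Fintype n] (x y : n → ℂ) : ℂ := ∑ i, star (x i) * y i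

/-- projector onto a vector -/
def proj {n : Type*} [Fintype n] (v : n → ℂ) : Matrix n n ℂ := Matrix.vecMulVec v (star v)

/-- the state ρ_SU -/
noncomputable def rhoSU : Matrix Q3 Q3 ℂ :=
  (4 : ℂ)⁻¹ • ((1 : Matrix Q3 Q3 ℂ) - ∑ i : Fin 4, proj (Shifts i))

/-! Any two of |0⟩, |1⟩, |+⟩, |−⟩ span ℂ², so a nonzero qubit is orthogonal to at most one of
them, and in the Shifts states each party sees each of the four exactly once. If a ⊗ b ⊗ c is
orthogonal to S_i, one of its factors is orthogonal to the corresponding local state; with four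
states and three parties, some party would have to be orthogonal to two different local states. -/

def kets : Fin 4 → Fin 2 → ℂ := ![ket0, ket1, ketP, ketM]

lemma ip_tp3 (x y z a b c : Fin 2 → ℂ) :
    ip (tp3 x y z) (tp3 a b c) = ip x a * ip y b * ip z c := by
  simp only [ip, tp3, Fintype.sum_prod_type, Fin.sum_univ_two, star_mul]
  ring

lemma ip_kets_zero (a : Fin 2 → ℂ) : ip (kets 0) a = a 0 := by
  simp [ip, kets, ket0]

lemma ip_kets_one (a : Fin 2 → ℂ) : ip (kets 1) a = a 1 := by
  simp [ip, kets, ket1]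

lemma ip_kets_two (a : Fin 2 → ℂ) : ip (kets 2) a = (Real.sqrt 2 : ℂ)⁻¹ * (a 0 + a 1) := by
  simp [ip, kets, ketP]; ring

lemma ip_kets_three (a : Fin 2 → ℂ) : ip (kets 3) a = (Real.sqrt 2 : ℂ)⁻¹ * (a 0 - a 1) := by
  simp [ip, kets, ketM]; ring

lemma eq_of_ip_kets_eq_zero {a : Fin 2 → ℂ} (ha : a ≠ 0) {i j : Fin 4}
    (hi : ip (kets i) a = 0) (hj : ip (kets j) a = 0) : i = j := by
  contrapose! ha
  suffices a 0 = 0 ∧ a 1 = 0 by ext m; fin_cases m <;> simp [this]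
  fin_cases i <;> fin_cases j <;>
    simp_all [ip_kets_zero, ip_kets_one, ip_kets_two, ip_kets_three] <;> grind

def shiftsPerm : Fin 3 → Fin 4 → Fin 4 := ![id, ![1, 2, 0, 3], ![2, 0, 1, 3]]

lemma shiftsPerm_injective (k : Fin 3) : Function.Injective (shiftsPerm k) := by
  fin_cases k <;> decide

lemma Shifts_eq_tp3_kets (i : Fin 4) :
    Shifts i = tp3 (kets (shiftsPerm 0 i)) (kets (shiftsPerm 1 i)) (kets (shiftsPerm 2 i)) := by
  fin_cases i <;> rfl

theorem shifts_unextendible :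
    ¬ ∃ a b c : Fin 2 → ℂ, a ≠ 0 ∧ b ≠ 0 ∧ c ≠ 0 ∧
      ∀ i : Fin 4, ip (Shifts i) (tp3 a b c) = 0 := by
  rintro ⟨a, b, c, ha, hb, hc, horth⟩
  set v : Fin 3 → Fin 2 → ℂ := ![a, b, c]
  have hv : ∀ k, v k ≠ 0 := by
    intro k; fin_cases k <;> assumption
  have hparty : ∀ i, ∃ k, ip (kets (shiftsPerm k i)) (v k) = 0 := by
    intro i
    have h := horth i
    rw [Shifts_eq_tp3_kets, ip_tp3, mul_eq_zero, mul_eq_zero] at h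
    rcases h with (h | h) | h
    exacts [⟨0, h⟩, ⟨1, h⟩, ⟨2, h⟩]
  choose party hparty using hparty
  obtain ⟨i, j, hij, hsame⟩ := Fintype.exists_ne_map_eq_of_card_lt party (by simp)
  exact hij (shiftsPerm_injective _
    (eq_of_ip_kets_eq_zero (hv _) (hparty i) (hsame ▸ hparty j)))
end
end

section
/- The operator ρ^[3](8) = (1/8)(I₂₇ − Σ_{ψ∈U}|ψ̃⟩⟨ψ̃|), where U is the 19-element orthonormalized set U^[3]_PB, is a density operator of rank 8 and satisfies ρ^{T_X} = ρ for each subsystem X ∈ {A,B,C}; hence it is PPT across all three bipartite cuts. -/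
noncomputable section

open scoped BigOperators ComplexOrder

abbrev T3 := Fin 3 × Fin 3 × Fin 3

/-- |η_i⟩ = |0⟩ + (-1)^i |1⟩ -/
def eta (i : Fin 2) : Fin 3 → ℂ := ![1, (-1 : ℂ) ^ (i : ℕ), 0]

/-- |ξ_j⟩ = |1⟩ + (-1)^j |2⟩ -/
def xi (j : Fin 2) : Fin 3 → ℂ := ![0, 1, (-1 : ℂ) ^ (j : ℕ)]

/-- computational basis vector |k⟩ of ℂ³ -/
def ketk (k : Fin 3) : Fin 3 → ℂ := fun m => if m = k then 1 else 0

/-- tensor product of three qutrit vectors -/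
def tp (a b c : Fin 3 → ℂ) : T3 → ℂ := fun x => a x.1 * b x.2.1 * c x.2.2

/-- the six families B₁,…,B₆ of twisted product states: fam l i j = |ψ(i,j)⟩_{l+1} -/
def fam (l : Fin 6) (i j : Fin 2) : T3 → ℂ :=
  ![tp (ketk 0) (eta i) (xi j),
    tp (eta i) (ketk 2) (xi j),
    tp (ketk 2) (xi j) (eta i),
    tp (eta i) (xi j) (ketk 0),
    tp (xi j) (ketk 0) (eta i),
    tp (xi j) (eta i) (ketk 2)] l

/-- the stopper state S = (|0⟩+|1⟩+|2⟩)^{⊗3} -/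
def stopper : T3 → ℂ := tp (fun _ => 1) (fun _ => 1) (fun _ => 1)

/-- normalization of a vector -/
noncomputable def ntz {n : Type*} [Fintype n] (v : n → ℂ) : n → ℂ :=
  fun i => ((Real.sqrt (∑ m, Complex.normSq (v m)) : ℝ) : ℂ)⁻¹ * v i

/-- index type for the 19-element UPB: the 18 twisted states with (i,j) ≠ (0,0), plus S -/
abbrev UPBIdx := {x : Fin 6 × Fin 2 × Fin 2 // x.2 ≠ ((0 : Fin 2), (0 : Fin 2))} ⊕ Unit

/-- the 19 vectors of U^[3]_PB -/
def UPB : UPBIdx → (T3 → ℂ) :=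
  Sum.elim (fun x => fam x.1.1 x.1.2.1 x.1.2.2) (fun _ => stopper)

/-- partial transpose with respect to subsystem A -/
def ptA (ρ : Matrix T3 T3 ℂ) : Matrix T3 T3 ℂ :=
  Matrix.of fun x y => ρ (y.1, x.2) (x.1, y.2)

/-- partial transpose with respect to subsystem B -/
def ptB (ρ : Matrix T3 T3 ℂ) : Matrix T3 T3 ℂ :=
  Matrix.of fun x y => ρ (x.1, y.2.1, x.2.2) (y.1, x.2.1, y.2.2)

/-- partial transpose with respect to subsystem C -/
def ptC (ρ : Matrix T3 T3 ℂ) : Matrix T3 T3 ℂ :=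
  Matrix.of fun x y => ρ (x.1, x.2.1, y.2.2) (y.1, y.2.1, x.2.2)

/-- the state ρ^[3](8) -/
noncomputable def rho3 : Matrix T3 T3 ℂ :=
  (8 : ℂ)⁻¹ • ((1 : Matrix T3 T3 ℂ) - ∑ t : UPBIdx, proj (ntz (UPB t)))


/-
The nineteen vectors are pairwise orthogonal: two twisted states from different families have
orthogonal factors (⟨0|ξⱼ⟩, ⟨ηᵢ|2⟩ or ⟨0|2⟩) in some slot, two from the same family differ in
an orthogonal pair ηᵢ ⊥ η₁₋ᵢ or ξⱼ ⊥ ξ₁₋ⱼ, and the stopper is orthogonal to |ψ(i,j)⟩ with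
(i,j) ≠ (0,0) since ⟨0+1+2|η₁⟩ = ⟨0+1+2|ξ₁⟩ = 0. After normalisation the sum of their
projectors is therefore an orthogonal projection, so 8ρ is the complementary projection: it is
positive, and its rank equals its trace 27 − 19 = 8. Each vector is a product of real vectors,
so transposing any one factor fixes its projector; the identity is fixed as well.
-/

open Matrix

section InnerProduct

variable {n : Type*} [Fintype n]

lemma ip_eq_dotProduct (x y : n → ℂ) : ip x y = star x ⬝ᵥ y := rfl

lemma star_ip (x y : n → ℂ) : star (ip x y) = ip y x := by
  rw [ip_eq_dotProduct, ip_eq_dotProduct, star_dotProduct, star_star]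

lemma ip_smul_smul (c d : ℂ) (x y : n → ℂ) : ip (c • x) (d • y) = star c * d * ip x y := by
  simp only [ip_eq_dotProduct, star_smul, smul_dotProduct, dotProduct_smul, smul_eq_mul]
  ring

lemma ofReal_sum_normSq (v : n → ℂ) : ((∑ m, Complex.normSq (v m) : ℝ) : ℂ) = ip v v := by
  simp only [Complex.ofReal_sum, Complex.normSq_eq_conj_mul_self, ip]
  rfl

lemma ntz_eq_smul (v : n → ℂ) :
    ntz v = ((Real.sqrt (∑ m, Complex.normSq (v m)) : ℝ) : ℂ)⁻¹ • v := rfl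

lemma ip_ntz_ntz_of_ip_eq_zero {v w : n → ℂ} (h : ip v w = 0) : ip (ntz v) (ntz w) = 0 := by
  rw [ntz_eq_smul, ntz_eq_smul, ip_smul_smul, h, mul_zero]

lemma ip_ntz_self {v : n → ℂ} (hv : v ≠ 0) : ip (ntz v) (ntz v) = 1 := by
  have hs : ∑ m, Complex.normSq (v m) ≠ 0 := fun h => hv <| by
    rw [← dotProduct_star_self_eq_zero, ← ip_eq_dotProduct, ← ofReal_sum_normSq, h,
      Complex.ofReal_zero]
  set s := ∑ m, Complex.normSq (v m)
  have hs₀ : 0 ≤ s := Finset.sum_nonneg fun _ _ => Complex.normSq_nonneg _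
  have h : (Real.sqrt s)⁻¹ * (Real.sqrt s)⁻¹ * s = 1 := by
    rw [← mul_inv, Real.mul_self_sqrt hs₀, inv_mul_cancel₀ hs]
  rw [ntz_eq_smul, ip_smul_smul, ← ofReal_sum_normSq, Complex.star_def, ← Complex.ofReal_inv,
    Complex.conj_ofReal]
  exact_mod_cast h

lemma ip_ntz_ntz {ι : Type*} [DecidableEq ι] {u : ι → n → ℂ}
    (hu : Pairwise fun s t => ip (u s) (u t) = 0) (hne : ∀ s, u s ≠ 0) (s t : ι) :
    ip (ntz (u s)) (ntz (u t)) = if s = t then 1 else 0 := by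
  split_ifs with h
  · subst h
    exact ip_ntz_self (hne s)
  · exact ip_ntz_ntz_of_ip_eq_zero (hu h)

lemma proj_mul_proj (a b : n → ℂ) : proj a * proj b = ip a b • vecMulVec a (star b) := by
  rw [proj, proj, vecMulVec_mul_vecMulVec, vecMulVec_smul, ip_eq_dotProduct]

lemma trace_proj (v : n → ℂ) : (proj v).trace = ip v v := by
  rw [proj, trace_vecMulVec, ip_eq_dotProduct, dotProduct_comm]

lemma isStarProjection_sum_proj {ι : Type*} [Fintype ι] [DecidableEq ι] {u : ι → n → ℂ}
    (hu : ∀ s t, ip (u s) (u t) = if s = t then 1 else 0) :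
    IsStarProjection (∑ i, proj (u i)) := by
  refine ⟨?_, ?_⟩
  · simp only [IsIdempotentElem, Finset.sum_mul_sum, proj_mul_proj, hu, ite_smul, one_smul,
      zero_smul, Finset.sum_ite_eq, Finset.mem_univ, if_true]
    rfl
  · simp [IsSelfAdjoint, star_sum, proj, Matrix.star_eq_conjTranspose, conjTranspose_vecMulVec]

end InnerProduct

lemma IsStarProjection.posSemidef {n R : Type*} [Fintype n] [CommRing R] [PartialOrder R]
    [StarRing R] [StarOrderedRing R] {Q : Matrix n n R} (hQ : IsStarProjection Q) :
    Q.PosSemidef := by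
  rw [← hQ.isIdempotentElem.eq]
  nth_rw 1 [← hQ.isSelfAdjoint.star_eq]
  exact posSemidef_conjTranspose_mul_self Q

lemma IsIdempotentElem.rank_eq_trace {n K : Type*} [Fintype n] [DecidableEq n] [Field K]
    [CharZero K] {Q : Matrix n n K} (hQ : IsIdempotentElem Q) : (Q.rank : K) = Q.trace := by
  have h : IsIdempotentElem Q.toLin' := hQ.map Matrix.toLinAlgEquiv'
  rw [← Matrix.trace_toLin'_eq, (LinearMap.IsIdempotentElem.isProj_range _ h).trace]
  rfl

section Complement

variable {n ι : Type*} [Fintype n] [DecidableEq n] [Fintype ι] [DecidableEq ι] {u : ι → n → ℂ}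

lemma isStarProjection_one_sub_sum_proj (hu : ∀ s t, ip (u s) (u t) = if s = t then 1 else 0) :
    IsStarProjection (1 - ∑ i, proj (u i)) :=
  (isStarProjection_sum_proj hu).one_sub

lemma trace_one_sub_sum_proj (hu : ∀ s t, ip (u s) (u t) = if s = t then 1 else 0) :
    (1 - ∑ i, proj (u i)).trace = Fintype.card n - Fintype.card ι := by
  simp [trace_sub, trace_sum, trace_proj, hu]

lemma rank_one_sub_sum_proj (hu : ∀ s t, ip (u s) (u t) = if s = t then 1 else 0) :
    ((1 - ∑ i, proj (u i)).rank : ℂ) = Fintype.card n - Fintype.card ι :=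
  (isStarProjection_one_sub_sum_proj hu).isIdempotentElem.rank_eq_trace.trans
    (trace_one_sub_sum_proj hu)

end Complement

lemma ip_tp (a b c a' b' c' : Fin 3 → ℂ) :
    ip (tp a b c) (tp a' b' c') = ip a a' * ip b b' * ip c c' := by
  simp only [ip, tp, Fintype.sum_prod_type, star_mul']
  rw [Finset.sum_mul_sum]
  simp_rw [Finset.sum_mul, Finset.mul_sum]
  refine Finset.sum_congr rfl fun _ _ => Finset.sum_congr rfl fun _ _ =>
    Finset.sum_congr rfl fun _ _ => by ring

lemma ip_ketk_left (k : Fin 3) (v : Fin 3 → ℂ) : ip (ketk k) v = v k := by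
  simp [ip, ketk]

lemma ip_ketk_right (v : Fin 3 → ℂ) (k : Fin 3) : ip v (ketk k) = star (v k) := by
  simp [ip, ketk]

lemma ip_eta_eta (i i' : Fin 2) : ip (eta i) (eta i') = if i = i' then 2 else 0 := by
  fin_cases i <;> fin_cases i' <;>
    simp [ip, Fin.sum_univ_three, eta, Matrix.cons_val, one_add_one_eq_two]

lemma ip_xi_xi (j j' : Fin 2) : ip (xi j) (xi j') = if j = j' then 2 else 0 := by
  fin_cases j <;> fin_cases j' <;>
    simp [ip, Fin.sum_univ_three, xi, Matrix.cons_val, one_add_one_eq_two]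

lemma ip_eta_one (i : Fin 2) : ip (eta i) (fun _ => 1) = if i = 0 then 2 else 0 := by
  fin_cases i <;> simp [ip, Fin.sum_univ_three, eta, Matrix.cons_val, one_add_one_eq_two]

lemma ip_xi_one (j : Fin 2) : ip (xi j) (fun _ => 1) = if j = 0 then 2 else 0 := by
  fin_cases j <;> simp [ip, Fin.sum_univ_three, xi, Matrix.cons_val, one_add_one_eq_two]

lemma ip_fam_fam (l : Fin 6) (i j i' j' : Fin 2) :
    ip (fam l i j) (fam l i' j') = if i = i' ∧ j = j' then 4 else 0 := by
  by_cases hi : i = i' <;> by_cases hj : j = j' <;> fin_cases l <;>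
    norm_num [fam, ip_tp, ip_eta_eta, ip_xi_xi, ip_ketk_left, ketk, hi, hj]

lemma ip_fam_fam_of_ne {l l' : Fin 6} (h : l ≠ l') (i j i' j' : Fin 2) :
    ip (fam l i j) (fam l' i' j') = 0 := by
  fin_cases l <;> fin_cases l' <;>
    simp_all [fam, ip_tp, ip_ketk_left, ip_ketk_right, eta, xi, ketk]

lemma ip_fam_stopper (l : Fin 6) (i j : Fin 2) :
    ip (fam l i j) stopper = if i = 0 ∧ j = 0 then 4 else 0 := by
  by_cases hi : i = 0 <;> by_cases hj : j = 0 <;> fin_cases l <;>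
    norm_num [fam, stopper, ip_tp, ip_eta_one, ip_xi_one, ip_ketk_left, hi, hj]

lemma ip_stopper_stopper : ip stopper stopper = 27 := by
  rw [stopper, ip_tp]
  norm_num [ip, Fin.sum_univ_three]

lemma UPB_pairwise_orthogonal : Pairwise fun s t : UPBIdx => ip (UPB s) (UPB t) = 0 := by
  rintro (⟨⟨l, i, j⟩, hs⟩ | ⟨⟩) (⟨⟨l', i', j'⟩, ht⟩ | ⟨⟩) hne
  · by_cases hl : l = l'
    · subst hl
      refine (ip_fam_fam l i j i' j').trans (if_neg ?_)
      rintro ⟨rfl, rfl⟩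
      exact hne rfl
    · exact ip_fam_fam_of_ne hl i j i' j'
  · refine (ip_fam_stopper l i j).trans (if_neg ?_)
    rintro ⟨rfl, rfl⟩
    exact hs rfl
  · change ip stopper (fam l' i' j') = 0
    rw [← star_ip, ip_fam_stopper, if_neg, star_zero]
    rintro ⟨rfl, rfl⟩
    exact ht rfl
  · exact absurd rfl hne

lemma UPB_ne_zero (t : UPBIdx) : UPB t ≠ 0 := by
  rw [Ne, ← dotProduct_star_self_eq_zero, ← ip_eq_dotProduct]
  rcases t with ⟨⟨l, i, j⟩, _⟩ | ⟨⟩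
  · change ip (fam l i j) (fam l i j) ≠ 0
    norm_num [ip_fam_fam]
  · change ip stopper stopper ≠ 0
    norm_num [ip_stopper_stopper]

lemma ip_ntz_UPB (s t : UPBIdx) : ip (ntz (UPB s)) (ntz (UPB t)) = if s = t then 1 else 0 :=
  ip_ntz_ntz UPB_pairwise_orthogonal UPB_ne_zero s t

lemma card_UPBIdx : Fintype.card UPBIdx = 19 := rfl

lemma isSelfAdjoint_eta (i : Fin 2) : IsSelfAdjoint (eta i) := by
  ext m
  fin_cases m <;> simp [eta, Matrix.cons_val, star_pow]

lemma isSelfAdjoint_xi (j : Fin 2) : IsSelfAdjoint (xi j) := by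
  ext m
  fin_cases m <;> simp [xi, Matrix.cons_val, star_pow]

lemma isSelfAdjoint_ketk (k : Fin 3) : IsSelfAdjoint (ketk k) := by
  ext m
  by_cases h : m = k <;> simp [ketk, h]

lemma exists_UPB_eq_tp (t : UPBIdx) : ∃ a b c : Fin 3 → ℂ,
    IsSelfAdjoint a ∧ IsSelfAdjoint b ∧ IsSelfAdjoint c ∧ UPB t = tp a b c := by
  rcases t with ⟨⟨l, i, j⟩, _⟩ | ⟨⟩
  · have := isSelfAdjoint_eta i
    have := isSelfAdjoint_xi j
    have := isSelfAdjoint_ketk 0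
    have := isSelfAdjoint_ketk 2
    fin_cases l <;> exact ⟨_, _, _, by assumption, by assumption, by assumption, rfl⟩
  · exact ⟨_, _, _, .one _, .one _, .one _, rfl⟩

lemma map_rho3 (L : Matrix T3 T3 ℂ →ₗ[ℂ] Matrix T3 T3 ℂ) (h₁ : L 1 = 1)
    (hL : ∀ a b c : Fin 3 → ℂ, IsSelfAdjoint a → IsSelfAdjoint b → IsSelfAdjoint c →
      L (proj (ntz (tp a b c))) = proj (ntz (tp a b c))) :
    L rho3 = rho3 := by
  rw [rho3, map_smul, map_sub, map_sum, h₁]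
  congr 3 with t
  obtain ⟨a, b, c, ha, hb, hc, ht⟩ := exists_UPB_eq_tp t
  rw [ht, hL a b c ha hb hc]

def ptALinearMap : Matrix T3 T3 ℂ →ₗ[ℂ] Matrix T3 T3 ℂ where
  toFun := ptA
  map_add' _ _ := rfl
  map_smul' _ _ := rfl

def ptBLinearMap : Matrix T3 T3 ℂ →ₗ[ℂ] Matrix T3 T3 ℂ where
  toFun := ptB
  map_add' _ _ := rfl
  map_smul' _ _ := rfl

def ptCLinearMap : Matrix T3 T3 ℂ →ₗ[ℂ] Matrix T3 T3 ℂ where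
  toFun := ptC
  map_add' _ _ := rfl
  map_smul' _ _ := rfl

lemma ptA_one : ptA 1 = 1 := by
  ext x y
  simp only [ptA, of_apply, one_apply, Prod.ext_iff]
  grind

lemma ptB_one : ptB 1 = 1 := by
  ext x y
  simp only [ptB, of_apply, one_apply, Prod.ext_iff]
  grind

lemma ptC_one : ptC 1 = 1 := by
  ext x y
  simp only [ptC, of_apply, one_apply, Prod.ext_iff]
  grind

lemma ptA_proj_ntz_tp {a : Fin 3 → ℂ} (ha : IsSelfAdjoint a) (b c : Fin 3 → ℂ) :
    ptA (proj (ntz (tp a b c))) = proj (ntz (tp a b c)) := by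
  have ha' (m : Fin 3) : star (a m) = a m := congrFun ha.star_eq m
  ext x y
  simp only [ptA, of_apply, proj, vecMulVec_apply, Pi.star_apply, ntz, tp, star_mul', ha']
  ring

lemma ptB_proj_ntz_tp {b : Fin 3 → ℂ} (a : Fin 3 → ℂ) (hb : IsSelfAdjoint b) (c : Fin 3 → ℂ) :
    ptB (proj (ntz (tp a b c))) = proj (ntz (tp a b c)) := by
  have hb' (m : Fin 3) : star (b m) = b m := congrFun hb.star_eq m
  ext x y
  simp only [ptB, of_apply, proj, vecMulVec_apply, Pi.star_apply, ntz, tp, star_mul', hb']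
  ring

lemma ptC_proj_ntz_tp {c : Fin 3 → ℂ} (a b : Fin 3 → ℂ) (hc : IsSelfAdjoint c) :
    ptC (proj (ntz (tp a b c))) = proj (ntz (tp a b c)) := by
  have hc' (m : Fin 3) : star (c m) = c m := congrFun hc.star_eq m
  ext x y
  simp only [ptC, of_apply, proj, vecMulVec_apply, Pi.star_apply, ntz, tp, star_mul', hc']
  ring

theorem rho3_density_rank8_ppt :
    rho3.PosSemidef ∧ rho3.trace = 1 ∧ rho3.rank = 8 ∧
    ptA rho3 = rho3 ∧ ptB rho3 = rho3 ∧ ptC rho3 = rho3 := by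
  set Q : Matrix T3 T3 ℂ := 1 - ∑ t : UPBIdx, proj (ntz (UPB t))
  have hρ : rho3 = (8 : ℂ)⁻¹ • Q := rfl
  have htrace : Q.trace = 8 := by
    rw [trace_one_sub_sum_proj ip_ntz_UPB, card_UPBIdx]
    norm_num
  have hrank : Q.rank = 8 := by
    have h : (Q.rank : ℂ) = 8 := by
      rw [rank_one_sub_sum_proj ip_ntz_UPB, card_UPBIdx]
      norm_num
    exact_mod_cast h
  refine ⟨?_, ?_, ?_, ?_, ?_, ?_⟩
  · exact hρ ▸ (isStarProjection_one_sub_sum_proj ip_ntz_UPB).posSemidef.smul (by positivity)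
  · rw [hρ, trace_smul, htrace, smul_eq_mul, inv_mul_cancel₀ (by norm_num)]
  · rw [hρ, rank_smul_of_mem_nonZeroDivisors _ (mem_nonZeroDivisors_of_ne_zero (by norm_num)),
      hrank]
  · exact map_rho3 ptALinearMap ptA_one fun _ b c ha _ _ => ptA_proj_ntz_tp ha b c
  · exact map_rho3 ptBLinearMap ptB_one fun a _ c _ hb _ => ptB_proj_ntz_tp a hb c
  · exact map_rho3 ptCLinearMap ptC_one fun a b _ _ _ hc => ptC_proj_ntz_tp a b hc
end
end
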